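/- Positive definiteness of the updated scale matrix: under the assumptions of the previous lemma, if Σ_0 is a positive definite d×d matrix, then Σ* = Σ_0 + (κ_0 + R)^{-1} K is positive definite, where K = (κ_0 + R)(κ_0 μ_0 μ_0^T + Σ_n r_n y^n (y^n)^T) − (κ_0 μ_0 + Σ_n r_n y^n)(κ_0 μ_0 + Σ_n r_n y^n)^T and R = Σ_n r_n. -/

import Mathlib

open Finset Matrix

lemma weighted_cauchy_schwarz {ι : Type*} [Fintype ι] (w c : ι → ℝ) (hw : ∀ i, 0 ≤ w i) :
    (∑ i, w i * c i) ^ 2 ≤ (∑ i, w i) * ∑ i, w i * c i ^ 2 :=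
  Finset.sum_sq_le_sum_mul_sum_of_sq_eq_mul _ (fun i _ => hw i)
    (fun i _ => mul_nonneg (hw i) (sq_nonneg _)) (fun i _ => by ring)

lemma dot_vecMulVec {d : ℕ} (u x : Fin d → ℝ) :
    x ⬝ᵥ (Matrix.vecMulVec u u *ᵥ x) = (u ⬝ᵥ x) ^ 2 := by
  simp only [dotProduct, Matrix.mulVec, Matrix.vecMulVec_apply]
  rw [sq, Finset.sum_mul_sum]
  refine Finset.sum_congr rfl fun i _ => ?_
  simp only [Finset.mul_sum]
  exact Finset.sum_congr rfl fun j _ => by ring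

lemma my_sum_mulVec {d N : ℕ} (M : Fin N → Matrix (Fin d) (Fin d) ℝ) (x : Fin d → ℝ) :
    (∑ n, M n) *ᵥ x = ∑ n, M n *ᵥ x := by
  ext i
  simp only [Matrix.mulVec, dotProduct, Finset.sum_apply, Matrix.sum_apply, Finset.sum_mul]
  exact Finset.sum_comm

lemma my_sum_dotProduct {d N : ℕ} (v : Fin N → Fin d → ℝ) (x : Fin d → ℝ) :
    (∑ n, v n) ⬝ᵥ x = ∑ n, v n ⬝ᵥ x := by
  simp only [dotProduct, Finset.sum_apply, Finset.sum_mul]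
  exact Finset.sum_comm

lemma my_dotProduct_sum {d N : ℕ} (v : Fin N → Fin d → ℝ) (x : Fin d → ℝ) :
    x ⬝ᵥ (∑ n, v n) = ∑ n, x ⬝ᵥ v n := by
  simp only [dotProduct, Finset.sum_apply, Finset.mul_sum]
  exact Finset.sum_comm

lemma quad_form_eq (d N : ℕ) (μ₀ : Fin d → ℝ)
    (y : Fin N → Fin d → ℝ) (κ₀ : ℝ)
    (r : Fin N → ℝ) (x : Fin d → ℝ) :
    x ⬝ᵥ (((κ₀ + ∑ n, r n) •
            (κ₀ • Matrix.vecMulVec μ₀ μ₀ + ∑ n, r n • Matrix.vecMulVec (y n) (y n)) -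
          Matrix.vecMulVec (κ₀ • μ₀ + ∑ n, r n • y n)
            (κ₀ • μ₀ + ∑ n, r n • y n)) *ᵥ x)
    = (κ₀ + ∑ n, r n) * (κ₀ * (μ₀ ⬝ᵥ x) ^ 2 + ∑ n, r n * (y n ⬝ᵥ x) ^ 2)
      - (κ₀ * (μ₀ ⬝ᵥ x) + ∑ n, r n * (y n ⬝ᵥ x)) ^ 2 := by
  rw [Matrix.sub_mulVec, dotProduct_sub, Matrix.smul_mulVec, dotProduct_smul,
    Matrix.add_mulVec, dotProduct_add, Matrix.smul_mulVec, dotProduct_smul,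
    dot_vecMulVec, dot_vecMulVec]
  congr 2
  · congr 1
    rw [my_sum_mulVec, my_dotProduct_sum]
    refine Finset.sum_congr rfl fun n _ => ?_
    rw [Matrix.smul_mulVec, dotProduct_smul, dot_vecMulVec, smul_eq_mul]
  · rw [add_dotProduct, smul_dotProduct, my_sum_dotProduct]
    simp [smul_dotProduct]

lemma quad_form_nonneg (d N : ℕ) (μ₀ : Fin d → ℝ)
    (y : Fin N → Fin d → ℝ) (κ₀ : ℝ) (hκ₀ : 0 < κ₀)
    (r : Fin N → ℝ) (hr : ∀ n, 0 < r n) (x : Fin d → ℝ) :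
    (κ₀ * (μ₀ ⬝ᵥ x) + ∑ n, r n * (y n ⬝ᵥ x)) ^ 2
      ≤ (κ₀ + ∑ n, r n) * (κ₀ * (μ₀ ⬝ᵥ x) ^ 2 + ∑ n, r n * (y n ⬝ᵥ x) ^ 2) := by
  have := weighted_cauchy_schwarz (ι := Option (Fin N))
    (fun o => o.elim κ₀ r) (fun o => o.elim (μ₀ ⬝ᵥ x) (fun n => y n ⬝ᵥ x))
    (fun o => by cases o with
      | none => exact hκ₀.le
      | some n => exact (hr n).le)
  simpa [Fintype.sum_option] using this

lemma herm_K (d N : ℕ) (μ₀ : Fin d → ℝ)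
    (y : Fin N → Fin d → ℝ) (κ₀ : ℝ) (r : Fin N → ℝ) :
    (((κ₀ + ∑ n, r n) •
            (κ₀ • Matrix.vecMulVec μ₀ μ₀ + ∑ n, r n • Matrix.vecMulVec (y n) (y n)) -
          Matrix.vecMulVec (κ₀ • μ₀ + ∑ n, r n • y n)
            (κ₀ • μ₀ + ∑ n, r n • y n))).IsHermitian := by
  unfold Matrix.IsHermitian
  ext i j
  simp only [Matrix.conjTranspose_apply, Matrix.sub_apply, Matrix.smul_apply, Matrix.add_apply,
    Matrix.sum_apply, Matrix.vecMulVec_apply, smul_eq_mul, star_trivial, Pi.add_apply,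
    Pi.smul_apply, Finset.sum_apply]
  have h1 : ∀ (u : Fin d → ℝ), u j * u i = u i * u j := fun u => mul_comm _ _
  have h2 : (∑ n, r n * (y n j * y n i)) = ∑ n, r n * (y n i * y n j) :=
    Finset.sum_congr rfl fun n _ => by ring
  have h3 : (κ₀ * μ₀ j + ∑ n, r n * y n j) * (κ₀ * μ₀ i + ∑ n, r n * y n i)
      = (κ₀ * μ₀ i + ∑ n, r n * y n i) * (κ₀ * μ₀ j + ∑ n, r n * y n j) := mul_comm _ _
  rw [h1 μ₀, h2, h3]

/-- Positive definiteness of the updated scale matrix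
`Σ* = Σ₀ + (κ₀ + R)⁻¹ K` when `Σ₀` is positive definite. -/
theorem updated_scale_matrix_posDef (d N : ℕ) (S₀ : Matrix (Fin d) (Fin d) ℝ)
    (hS₀ : S₀.PosDef) (μ₀ : Fin d → ℝ)
    (y : Fin N → Fin d → ℝ) (κ₀ : ℝ) (hκ₀ : 0 < κ₀)
    (r : Fin N → ℝ) (hr : ∀ n, 0 < r n) :
    (S₀ + (κ₀ + ∑ n, r n)⁻¹ •
        ((κ₀ + ∑ n, r n) •
            (κ₀ • Matrix.vecMulVec μ₀ μ₀ + ∑ n, r n • Matrix.vecMulVec (y n) (y n)) -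
          Matrix.vecMulVec (κ₀ • μ₀ + ∑ n, r n • y n)
            (κ₀ • μ₀ + ∑ n, r n • y n))).PosDef := by
  have hc : 0 ≤ (κ₀ + ∑ n, r n)⁻¹ :=
    inv_nonneg.2 (add_pos_of_pos_of_nonneg hκ₀ (Finset.sum_nonneg fun n _ => (hr n).le)).le
  refine hS₀.add_posSemidef (Matrix.posSemidef_iff_dotProduct_mulVec.mpr ⟨?_, fun x => ?_⟩)
  · rw [Matrix.IsHermitian, Matrix.conjTranspose_smul, star_trivial, herm_K d N μ₀ y κ₀ r]
  · rw [star_trivial, Matrix.smul_mulVec, dotProduct_smul, smul_eq_mul]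
    refine mul_nonneg hc ?_
    rw [quad_form_eq, sub_nonneg]
    exact quad_form_nonneg d N μ₀ y κ₀ hκ₀ r hr x
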